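/- arXiv:math/0209049 — 6 statements merged into one kernel-verified Lean document; each statement's English description precedes it below -/
import Mathlib

section
/- Let U be a partial isometry on H and A a unital *-subalgebra of L(H) with Ua = (UaU*)U for all a ∈ A and UaU* ∈ A for all a ∈ A. Then every power Uᵏ (k ≥ 1) is a partial isometry and U*ᵏUᵏ commutes with every element of A. -/
theorem stmt_7 {H : Type*} [NormedAddCommGroup H] [InnerProductSpace ℂ H]
    [CompleteSpace H] (U : H →L[ℂ] H) (A : StarSubalgebra ℂ (H →L[ℂ] H))
    (hU : U * star U * U = U)
    (h22 : ∀ a ∈ A, U * a = (U * a * star U) * U)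
    (h23 : ∀ a ∈ A, U * a * star U ∈ A) :
    ∀ k : ℕ, 1 ≤ k →
      U ^ k * star (U ^ k) * U ^ k = U ^ k ∧
      ∀ a ∈ A, star (U ^ k) * U ^ k * a = a * (star (U ^ k) * U ^ k) := by
  have key : ∀ k : ℕ, ∀ a ∈ A, ∃ b ∈ A,
      U ^ k * a = b * U ^ k ∧ U ^ k * star a = star b * U ^ k := by
    intro k
    induction k with
    | zero => intro a ha; exact ⟨a, ha, by simp, by simp⟩
    | succ k ih =>
      intro a ha
      obtain ⟨b, hb, h1, h2⟩ := ih a ha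
      refine ⟨U * b * star U, h23 b hb, ?_, ?_⟩
      · calc U ^ (k + 1) * a = U * (U ^ k * a) := by rw [pow_succ', mul_assoc]
          _ = (U * b) * U ^ k := by rw [h1, mul_assoc]
          _ = ((U * b * star U) * U) * U ^ k := by rw [← h22 b hb]
          _ = (U * b * star U) * U ^ (k + 1) := by rw [pow_succ', mul_assoc]
      · have hbs : star b ∈ A := star_mem hb
        calc U ^ (k + 1) * star a = U * (U ^ k * star a) := by
              rw [pow_succ', mul_assoc]
          _ = (U * star b) * U ^ k := by rw [h2, mul_assoc]
          _ = ((U * star b * star U) * U) * U ^ k := by rw [← h22 (star b) hbs]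
          _ = (U * star b * star U) * U ^ (k + 1) := by rw [pow_succ', mul_assoc]
          _ = star (U * b * star U) * U ^ (k + 1) := by
              simp [star_mul, mul_assoc]
  have piso : ∀ k : ℕ, U ^ k * star (U ^ k) ∈ A ∧
      U ^ k * star (U ^ k) * U ^ k = U ^ k := by
    intro k
    induction k with
    | zero => simpa using A.one_mem
    | succ k ih =>
      obtain ⟨hE, hEU⟩ := ih
      have hexp : U ^ (k + 1) * star (U ^ (k + 1)) =
          U * (U ^ k * star (U ^ k)) * star U := by
        rw [pow_succ', star_mul]
        noncomm_ring
      constructor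
      · rw [hexp]; exact h23 _ hE
      · rw [hexp]
        calc (U * (U ^ k * star (U ^ k)) * star U) * U ^ (k + 1)
            = ((U * (U ^ k * star (U ^ k)) * star U) * U) * U ^ k := by
              rw [pow_succ']; exact (mul_assoc _ _ _).symm
          _ = (U * (U ^ k * star (U ^ k))) * U ^ k := by rw [← h22 _ hE]
          _ = U * (U ^ k * star (U ^ k) * U ^ k) := by rw [mul_assoc]
          _ = U * U ^ k := by rw [hEU]
          _ = U ^ (k + 1) := (pow_succ' U k).symm
  intro k _
  refine ⟨(piso k).2, ?_⟩
  intro a ha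
  obtain ⟨b, hb, h1, h2⟩ := key k a ha
  have h3 : a * star (U ^ k) = star (U ^ k) * b := by
    have := congrArg star h2
    simpa [star_mul, mul_assoc] using this
  calc star (U ^ k) * U ^ k * a = star (U ^ k) * (U ^ k * a) := by rw [mul_assoc]
    _ = star (U ^ k) * b * U ^ k := by rw [h1, mul_assoc]
    _ = (a * star (U ^ k)) * U ^ k := by rw [← h3]
    _ = a * (star (U ^ k) * U ^ k) := by rw [mul_assoc]
end

section
/- Let U ∈ L(H) and A a unital *-subalgebra of L(H) satisfying Ua = (UaU*)U for all a ∈ A and UAU* ⊆ A. Then for all k, l ≥ 0 the projections U*ᵏUᵏ and UˡU*ˡ commute: [U*ᵏUᵏ, UˡU*ˡ] = 0. -/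
private lemma aux_Fsucc {H : Type*} [NormedAddCommGroup H] [InnerProductSpace ℂ H]
    [CompleteSpace H] (U : H →L[ℂ] H) (n : ℕ) :
    U ^ (n + 1) * star (U ^ (n + 1)) = U * (U ^ n * star (U ^ n)) * star U := by
  simp only [pow_succ' U n, star_mul, mul_assoc]

private lemma aux_Fstar {H : Type*} [NormedAddCommGroup H] [InnerProductSpace ℂ H]
    [CompleteSpace H] (U : H →L[ℂ] H) (n : ℕ) :
    star (U ^ n * star (U ^ n)) = U ^ n * star (U ^ n) := by
  rw [star_mul, star_star]

theorem stmt_9 {H : Type*} [NormedAddCommGroup H] [InnerProductSpace ℂ H]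
    [CompleteSpace H] (U : H →L[ℂ] H) (A : StarSubalgebra ℂ (H →L[ℂ] H))
    (h22 : ∀ a ∈ A, U * a = (U * a * star U) * U)
    (h23 : ∀ a ∈ A, U * a * star U ∈ A) :
    ∀ k l : ℕ,
      star (U ^ k) * U ^ k * (U ^ l * star (U ^ l)) -
        U ^ l * star (U ^ l) * (star (U ^ k) * U ^ k) = 0 := by
  have hmem : ∀ n : ℕ, U ^ n * star (U ^ n) ∈ A := by
    intro n
    induction n with
    | zero => simpa using A.one_mem
    | succ m ih =>
      rw [aux_Fsucc]
      exact h23 _ ih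
  have key : ∀ k m : ℕ, U ^ k * (U ^ m * star (U ^ m)) =
      (U ^ (m + k) * star (U ^ (m + k))) * U ^ k := by
    intro k
    induction k with
    | zero => simp
    | succ j ih =>
      intro m
      have e1 : U ^ (j + 1) * (U ^ m * star (U ^ m)) =
          U * ((U ^ (m + j) * star (U ^ (m + j))) * U ^ j) := by
        rw [pow_succ' U j, mul_assoc, ih m]
      rw [e1, ← mul_assoc, h22 _ (hmem (m + j)), ← aux_Fsucc,
        mul_assoc, ← pow_succ' U j, show m + j + 1 = m + (j + 1) by ring]
  intro k l
  have h1 : star (U ^ k) * U ^ k * (U ^ l * star (U ^ l)) =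
      star (U ^ k) * (U ^ (l + k) * star (U ^ (l + k))) * U ^ k := by
    rw [mul_assoc, key k l, ← mul_assoc]
  have h2 : U ^ l * star (U ^ l) * (star (U ^ k) * U ^ k) =
      star (U ^ k) * U ^ k * (U ^ l * star (U ^ l)) := by
    calc U ^ l * star (U ^ l) * (star (U ^ k) * U ^ k)
        = star (star (U ^ k) * U ^ k * (U ^ l * star (U ^ l))) := by
          simp only [star_mul, star_star, mul_assoc]
      _ = star (star (U ^ k) * (U ^ (l + k) * star (U ^ (l + k))) * U ^ k) := by
          rw [h1]
      _ = star (U ^ k) * (U ^ (l + k) * star (U ^ (l + k))) * U ^ k := by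
          simp only [star_mul, star_star, mul_assoc]
      _ = star (U ^ k) * U ^ k * (U ^ l * star (U ^ l)) := h1.symm
  rw [h2, sub_self]
end

section
/- Let U ∈ L(H) and A a unital *-subalgebra satisfying Ua = (UaU*)U for all a ∈ A and UAU* ⊆ A. Then for any 1 ≤ k ≤ l: U*UᵏU*ˡ = Uᵏ⁻¹U*ˡ and UU*ᵏUˡ = U*ᵏ⁻¹Uˡ. -/
theorem stmt_10 {H : Type*} [NormedAddCommGroup H] [InnerProductSpace ℂ H]
    [CompleteSpace H] (U : H →L[ℂ] H) (A : StarSubalgebra ℂ (H →L[ℂ] H))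
    (h22 : ∀ a ∈ A, U * a = (U * a * star U) * U)
    (h23 : ∀ a ∈ A, U * a * star U ∈ A) :
    ∀ k l : ℕ, 1 ≤ k → k ≤ l →
      star U * U ^ k * star U ^ l = U ^ (k - 1) * star U ^ l ∧
      U * star U ^ k * U ^ l = star U ^ (k - 1) * U ^ l := by
  -- a_n = U^n (U*)^n belongs to A
  have hmem : ∀ n : ℕ, U ^ n * star U ^ n ∈ A := by
    intro n
    induction n with
    | zero => simpa using A.one_mem
    | succ n ih =>
      have h := h23 _ ih
      have e : U * (U ^ n * star U ^ n) * star U = U ^ (n + 1) * star U ^ (n + 1) := by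
        rw [pow_succ (star U), pow_succ' U]
        simp only [mul_assoc]
      rwa [e] at h
  -- key: U^{n+1} (U*)^n = U^{n+1} ((U*)^{n+1} U)
  have key : ∀ n : ℕ, U ^ (n + 1) * star U ^ n = U ^ (n + 1) * (star U ^ (n + 1) * U) := by
    intro n
    have h := h22 _ (hmem n)
    calc U ^ (n + 1) * star U ^ n = U * (U ^ n * star U ^ n) := by
          rw [pow_succ' U]; simp only [mul_assoc]
      _ = (U * (U ^ n * star U ^ n) * star U) * U := h
      _ = (U ^ (n + 1) * star U ^ (n + 1)) * U := by
          rw [pow_succ (star U), pow_succ' U]; simp only [mul_assoc]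
      _ = U ^ (n + 1) * (star U ^ (n + 1) * U) := by simp only [mul_assoc]
  -- key2: star of key: U^n (U*)^{n+1} = U* (U^{n+1} (U*)^{n+1})
  have key2 : ∀ n : ℕ, U ^ n * star U ^ (n + 1) = star U * (U ^ (n + 1) * star U ^ (n + 1)) := by
    intro n
    have h := congrArg star (key n)
    simp only [star_mul, star_pow, star_star, mul_assoc] at h
    exact h
  -- L4b: U (U*)^{k+1} = (U*)^k (U^{k+1} (U*)^{k+1})
  have L4b : ∀ k : ℕ, U * star U ^ (k + 1) = star U ^ k * (U ^ (k + 1) * star U ^ (k + 1)) := by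
    intro k
    induction k with
    | zero => simpa using key2 0
    | succ k ih =>
      calc U * star U ^ (k + 1 + 1) = (U * star U ^ (k + 1)) * star U := by
            rw [pow_succ (star U)]; simp only [mul_assoc]
        _ = star U ^ k * (U ^ (k + 1) * star U ^ (k + 1) * star U) := by
            rw [ih]; simp only [mul_assoc]
        _ = star U ^ k * (U ^ (k + 1) * star U ^ (k + 2)) := by
            rw [pow_succ (star U) (k + 1)]; simp only [mul_assoc]
        _ = star U ^ k * (star U * (U ^ (k + 2) * star U ^ (k + 2))) := by rw [key2 (k + 1)]
        _ = star U ^ (k + 1) * (U ^ (k + 1 + 1) * star U ^ (k + 1 + 1)) := by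
            rw [pow_succ (star U) k]; simp only [mul_assoc]
  -- L5: U^k (U*)^k U^k = U^k
  have L5 : ∀ k : ℕ, U ^ k * (star U ^ k * U ^ k) = U ^ k := by
    intro k
    induction k with
    | zero => simp
    | succ k ih =>
      calc U ^ (k + 1) * (star U ^ (k + 1) * U ^ (k + 1))
          = (U ^ (k + 1) * (star U ^ (k + 1) * U)) * U ^ k := by
            rw [pow_succ' U (k)]; simp only [mul_assoc]
        _ = (U ^ (k + 1) * star U ^ k) * U ^ k := by rw [← key k]
        _ = U * (U ^ k * (star U ^ k * U ^ k)) := by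
            rw [pow_succ' U k]; simp only [mul_assoc]
        _ = U * U ^ k := by rw [ih]
        _ = U ^ (k + 1) := (pow_succ' U k).symm
  intro k l hk hkl
  obtain ⟨m, rfl⟩ : ∃ m, k = m + 1 := ⟨k - 1, (Nat.succ_pred_eq_of_pos hk).symm⟩
  obtain ⟨d, rfl⟩ : ∃ d, l = (m + 1) + d := ⟨l - (m + 1), (Nat.add_sub_cancel' hkl).symm⟩
  simp only [Nat.add_sub_cancel]
  constructor
  · calc star U * U ^ (m + 1) * star U ^ (m + 1 + d)
        = (star U * (U ^ (m + 1) * star U ^ (m + 1))) * star U ^ d := by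
          rw [pow_add (star U)]; simp only [mul_assoc]
      _ = (U ^ m * star U ^ (m + 1)) * star U ^ d := by rw [← key2 m]
      _ = U ^ m * star U ^ (m + 1 + d) := by
          simp only [pow_add, pow_one, pow_succ, mul_assoc]
  · calc U * star U ^ (m + 1) * U ^ (m + 1 + d)
        = (U * star U ^ (m + 1)) * (U ^ (m + 1) * U ^ d) := by
          rw [pow_add U]
      _ = star U ^ m * (U ^ (m + 1) * (star U ^ (m + 1) * U ^ (m + 1))) * U ^ d := by
          rw [L4b m]; simp only [mul_assoc]
      _ = star U ^ m * U ^ (m + 1) * U ^ d := by rw [L5 (m + 1)]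
      _ = star U ^ m * U ^ (m + 1 + d) := by
          simp only [pow_add, pow_one, pow_succ, mul_assoc]
end

section
/- Let A₀ be a unital *-subalgebra of L(H) and U ∈ L(H), and let δ(x)=UxU*. If δ(ab)=δ(a)δ(b) for all a,b ∈ A₀, then δ(δ*ᵏ(a)·δ*ˡ(b)) = δ(δ*ᵏ(a))·δ(δ*ˡ(b)) for all a,b ∈ A₀ and all k,l ≥ 0 with k ≥ 1 or l ≥ 1. -/
theorem stmt_14 {H : Type*} [NormedAddCommGroup H] [InnerProductSpace ℂ H]
    [CompleteSpace H] (U : H →L[ℂ] H) (A₀ : StarSubalgebra ℂ (H →L[ℂ] H))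
    (hmul : ∀ a ∈ A₀, ∀ b ∈ A₀,
      U * (a * b) * star U = (U * a * star U) * (U * b * star U)) :
    ∀ a ∈ A₀, ∀ b ∈ A₀, ∀ k l : ℕ, 1 ≤ k ∨ 1 ≤ l →
      U * ((fun x : H →L[ℂ] H => star U * x * U)^[k] a *
            (fun x : H →L[ℂ] H => star U * x * U)^[l] b) * star U =
        (U * (fun x : H →L[ℂ] H => star U * x * U)^[k] a * star U) *
          (U * (fun x : H →L[ℂ] H => star U * x * U)^[l] b * star U) := by
  set V := star U with hV
  -- Step 1: P = U V is a self-adjoint idempotent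
  have hP : U * V * (U * V) = U * V := by
    have := hmul 1 A₀.one_mem 1 A₀.one_mem
    simpa using this.symm
  -- Step 2: U V U = U via the C*-identity
  have hUVU : U * V * U = U := by
    have hx : (U - U * V * U) * star (U - U * V * U) = 0 := by
      have hstar : star (U - U * V * U) = V - V * (U * V) := by
        simp [hV, star_sub, star_mul, mul_assoc]
      rw [hstar]
      have h1 : U * V * U * (V * (U * V)) = U * V := by
        calc U * V * U * (V * (U * V)) = (U * V * (U * V)) * (U * V) := by
              simp only [mul_assoc]
          _ = U * V * (U * V) := by rw [hP, hP]
          _ = U * V := hP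
      calc (U - U * V * U) * (V - V * (U * V))
          = U * V - U * (V * (U * V)) - U * V * U * V + U * V * U * (V * (U * V)) := by
            noncomm_ring
        _ = U * V - U * V * (U * V) - U * V * (U * V) + U * V := by
            rw [h1]; noncomm_ring
        _ = 0 := by rw [hP]; noncomm_ring
    have := (CStarRing.mul_star_self_eq_zero_iff (U - U * V * U)).mp hx
    exact (sub_eq_zero.mp this).symm
  have hVUV : V * U * V = V := by
    have := congrArg star hUVU
    simpa [hV, star_mul, mul_assoc] using this
  -- auxiliary rewriting lemmas (right-associated)
  have haux : ∀ x : H →L[ℂ] H, U * (V * (U * x)) = U * x := by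
    intro x; rw [← mul_assoc, ← mul_assoc, hUVU]
  have hvaux : ∀ x : H →L[ℂ] H, V * (U * (V * x)) = V * x := by
    intro x; rw [← mul_assoc, ← mul_assoc, hVUV]
  intro a _ b _ k l hkl
  set f : (H →L[ℂ] H) → (H →L[ℂ] H) := fun x => star U * x * U with hf
  have hfs : ∀ (n : ℕ) (x : H →L[ℂ] H), f^[n+1] x = V * f^[n] x * U := by
    intro n x; rw [Function.iterate_succ_apply']
  match k, l, hkl with
  | k + 1, l + 1, _ =>
    rw [hfs k a, hfs l b]
    set c := f^[k] a
    set d := f^[l] b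
    simp only [mul_assoc]
    simp only [haux, hvaux]
  | k + 1, 0, _ =>
    rw [hfs k a]
    set c := f^[k] a
    simp only [Function.iterate_zero_apply]
    simp only [mul_assoc]
    simp only [haux, hvaux]
  | 0, l + 1, _ =>
    rw [hfs l b]
    set d := f^[l] b
    simp only [Function.iterate_zero_apply]
    simp only [mul_assoc]
    simp only [haux, hvaux]
end

section
/- Let A₀ be a unital *-subalgebra of L(H), U ∈ L(H) with Ua = (UaU*)U for all a ∈ A₀ and UA₀U* ⊆ A₀. Then for 0 ≤ l ≤ k and a,b ∈ A₀: δ*ᵏ(a)·δ*ˡ(b) = δ*ᵏ(a·δᵏ(1)·δᵏ⁻ˡ(b)) ∈ δ*ᵏ(A₀), i.e. δ*ᵏ(A₀)·δ*ˡ(A₀) ⊆ δ*ᵏ(A₀). -/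
theorem stmt_16 {H : Type*} [NormedAddCommGroup H] [InnerProductSpace ℂ H]
    [CompleteSpace H] (U : H →L[ℂ] H) (A₀ : StarSubalgebra ℂ (H →L[ℂ] H))
    (h22 : ∀ a ∈ A₀, U * a = (U * a * star U) * U)
    (h23 : ∀ a ∈ A₀, U * a * star U ∈ A₀) :
    ∀ k l : ℕ, l ≤ k → ∀ a ∈ A₀, ∀ b ∈ A₀,
      (fun x : H →L[ℂ] H => star U * x * U)^[k] a *
          (fun x : H →L[ℂ] H => star U * x * U)^[l] b =
        (fun x : H →L[ℂ] H => star U * x * U)^[k]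
          (a * (fun x : H →L[ℂ] H => U * x * star U)^[k] 1 *
            (fun x : H →L[ℂ] H => U * x * star U)^[k - l] b) ∧
      a * (fun x : H →L[ℂ] H => U * x * star U)^[k] 1 *
          (fun x : H →L[ℂ] H => U * x * star U)^[k - l] b ∈ A₀ := by
  set S : (H →L[ℂ] H) → (H →L[ℂ] H) := fun x => U * x * star U with hSdef
  set T : (H →L[ℂ] H) → (H →L[ℂ] H) := fun x => star U * x * U with hTdef
  -- key cancellation: star U * U * d * star U = d * star U for d ∈ A₀
  have key : ∀ d ∈ A₀, star U * (U * (d * star U)) = d * star U := by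
    intro d hd
    have h := congrArg star (h22 (star d) (star_mem hd))
    simpa [star_mul, mul_assoc] using h.symm
  -- S maps A₀ into A₀
  have Smem : ∀ n, ∀ x ∈ A₀, S^[n] x ∈ A₀ := by
    intro n
    induction n with
    | zero => intro x hx; simpa using hx
    | succ n ih =>
        intro x hx
        rw [Function.iterate_succ_apply']
        exact h23 _ (ih x hx)
  -- commutation: U ^ n * x = S^[n] x * U ^ n for x ∈ A₀
  have Scomm : ∀ n, ∀ x ∈ A₀, U ^ n * x = S^[n] x * U ^ n := by
    intro n
    induction n with
    | zero => intro x hx; simp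
    | succ n ih =>
        intro x hx
        rw [pow_succ', Function.iterate_succ_apply', mul_assoc, ih x hx,
          ← mul_assoc, h22 _ (Smem n x hx), hSdef]
        simp [mul_assoc, pow_succ']
  -- multiplicativity of S on A₀
  have Smul1 : ∀ x ∈ A₀, ∀ y ∈ A₀, S x * S y = S (x * y) := by
    intro x hx y hy
    show U * x * star U * (U * y * star U) = U * (x * y) * star U
    calc U * x * star U * (U * y * star U)
        = U * (x * (star U * (U * (y * star U)))) := by simp [mul_assoc]
      _ = U * (x * (y * star U)) := by rw [key y hy]
      _ = U * (x * y) * star U := by simp [mul_assoc]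
  have Smul : ∀ n, ∀ x ∈ A₀, ∀ y ∈ A₀, S^[n] (x * y) = S^[n] x * S^[n] y := by
    intro n
    induction n with
    | zero => intro x _ y _; simp
    | succ n ih =>
        intro x hx y hy
        rw [Function.iterate_succ_apply', Function.iterate_succ_apply',
          Function.iterate_succ_apply', ih x hx y hy]
        exact (Smul1 _ (Smem n x hx) _ (Smem n y hy)).symm
  -- iterate formulas
  have Siter : ∀ n (x : H →L[ℂ] H), S^[n] x = U ^ n * x * (star U) ^ n := by
    intro n
    induction n with
    | zero => intro x; simp
    | succ n ih =>
        intro x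
        rw [Function.iterate_succ_apply', ih, hSdef]
        rw [pow_succ' U, pow_succ (star U)]
        simp [mul_assoc]
  have Titer : ∀ n (x : H →L[ℂ] H), T^[n] x = (star U) ^ n * x * U ^ n := by
    intro n
    induction n with
    | zero => intro x; simp
    | succ n ih =>
        intro x
        rw [Function.iterate_succ_apply', ih, hTdef]
        rw [pow_succ' (star U), pow_succ U]
        simp [mul_assoc]
  intro k l hlk a ha b hb
  have hk : k - l + l = k := Nat.sub_add_cancel hlk
  have hmem : a * S^[k] 1 * S^[k - l] b ∈ A₀ :=
    A₀.mul_mem (A₀.mul_mem ha (Smem k 1 A₀.one_mem)) (Smem (k - l) b hb)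
  refine ⟨?_, hmem⟩
  -- main computation
  have hSl1 : U ^ l * (star U) ^ l = S^[l] 1 := by rw [Siter]; simp
  have hS1b : S^[l] 1 * b ∈ A₀ := A₀.mul_mem (Smem l 1 A₀.one_mem) hb
  have hmid : U ^ k * ((star U) ^ l * b * U ^ l)
      = S^[k] 1 * S^[k - l] b * U ^ k := by
    calc U ^ k * ((star U) ^ l * b * U ^ l)
        = U ^ (k - l) * ((U ^ l * (star U) ^ l) * b) * U ^ l := by
          rw [← hk, pow_add]; simp [mul_assoc]
      _ = U ^ (k - l) * (S^[l] 1 * b) * U ^ l := by rw [hSl1]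
      _ = S^[k - l] (S^[l] 1 * b) * U ^ (k - l) * U ^ l := by
          rw [Scomm (k - l) _ hS1b]
      _ = S^[k - l] (S^[l] 1) * S^[k - l] b * U ^ k := by
          rw [Smul (k - l) _ (Smem l 1 A₀.one_mem) _ hb, mul_assoc, ← pow_add, hk]
      _ = S^[k] 1 * S^[k - l] b * U ^ k := by
          rw [← Function.iterate_add_apply, hk]
  calc T^[k] a * T^[l] b
      = (star U) ^ k * a * (U ^ k * ((star U) ^ l * b * U ^ l)) := by
        rw [Titer, Titer]; simp [mul_assoc]
    _ = (star U) ^ k * a * (S^[k] 1 * S^[k - l] b * U ^ k) := by rw [hmid]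
    _ = (star U) ^ k * (a * S^[k] 1 * S^[k - l] b) * U ^ k := by
        simp [mul_assoc]
    _ = T^[k] (a * S^[k] 1 * S^[k - l] b) := by rw [Titer]
end

section
/- Let A₀ be a commutative unital *-subalgebra of L(H), U ∈ L(H) with Ua = (UaU*)U for all a ∈ A₀ and UA₀U* ⊆ A₀. Then the elements δ*ᵏ(a) = U*ᵏaUᵏ and δ*ˡ(b) = U*ˡbUˡ commute for all a,b ∈ A₀ and all k,l ≥ 0. -/
theorem stmt_17 {H : Type*} [NormedAddCommGroup H] [InnerProductSpace ℂ H]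
    [CompleteSpace H] (U : H →L[ℂ] H) (A₀ : StarSubalgebra ℂ (H →L[ℂ] H))
    (hcommA : ∀ a ∈ A₀, ∀ b ∈ A₀, a * b = b * a)
    (h22 : ∀ a ∈ A₀, U * a = (U * a * star U) * U)
    (h23 : ∀ a ∈ A₀, U * a * star U ∈ A₀) :
    ∀ a ∈ A₀, ∀ b ∈ A₀, ∀ k l : ℕ,
      (fun x : H →L[ℂ] H => star U * x * U)^[k] a *
          (fun x : H →L[ℂ] H => star U * x * U)^[l] b =
        (fun x : H →L[ℂ] H => star U * x * U)^[l] b *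
          (fun x : H →L[ℂ] H => star U * x * U)^[k] a := by
  set g : (H →L[ℂ] H) → (H →L[ℂ] H) := fun x => U * x * star U with hg
  set f : (H →L[ℂ] H) → (H →L[ℂ] H) := fun x => star U * x * U with hf
  -- iterate formula for f
  have hfk : ∀ (x : H →L[ℂ] H) (k : ℕ), f^[k] x = (star U)^k * x * U^k := by
    intro x k
    induction k with
    | zero => simp
    | succ n ih =>
      rw [Function.iterate_succ_apply', ih, hf, pow_succ U, pow_succ' (star U)]
      simp only [mul_assoc]
  -- g preserves A₀
  have hgmem : ∀ (m : ℕ), ∀ a ∈ A₀, g^[m] a ∈ A₀ := by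
    intro m
    induction m with
    | zero => intro a ha; simpa using ha
    | succ n ih =>
      intro a ha
      rw [Function.iterate_succ_apply]
      exact ih _ (h23 a ha)
  -- g commutes with star
  have hgstar : ∀ (m : ℕ) (x : H →L[ℂ] H), g^[m] (star x) = star (g^[m] x) := by
    intro m
    induction m with
    | zero => intro x; simp
    | succ n ih =>
      intro x
      rw [Function.iterate_succ_apply, Function.iterate_succ_apply]
      rw [← ih (g x)]
      congr 1
      simp only [hg, star_mul, star_star, mul_assoc]
  -- L2 : U^m * a = g^[m] a * U^m
  have hL2 : ∀ (m : ℕ), ∀ a ∈ A₀, U ^ m * a = g^[m] a * U ^ m := by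
    intro m
    induction m with
    | zero => intro a ha; simp
    | succ n ih =>
      intro a ha
      have : U ^ (n + 1) * a = U ^ n * (U * a) := by
        rw [pow_succ, mul_assoc]
      rw [this, h22 a ha]
      have hga : U * a * star U ∈ A₀ := h23 a ha
      calc U ^ n * (U * a * star U * U) = U ^ n * (U * a * star U) * U := by
            simp only [mul_assoc]
        _ = g^[n] (U * a * star U) * U ^ n * U := by rw [ih _ hga]
        _ = g^[n + 1] a * U ^ (n + 1) := by
            rw [Function.iterate_succ_apply, pow_succ, mul_assoc]
  -- L4 : a * (star U)^m = (star U)^m * g^[m] a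
  have hL4 : ∀ (m : ℕ), ∀ a ∈ A₀, a * (star U) ^ m = (star U) ^ m * g^[m] a := by
    intro m a ha
    have h := hL2 m (star a) (star_mem ha)
    have h' := congrArg star h
    simpa [star_mul, star_pow, hgstar m a] using h'
  -- q_k = U^k * (star U)^k ∈ A₀
  have hq : ∀ (k : ℕ), U ^ k * (star U) ^ k ∈ A₀ := by
    intro k
    induction k with
    | zero => simpa using one_mem A₀
    | succ n ih =>
      have h1 : U * star U ∈ A₀ := by simpa using h23 1 (one_mem A₀)
      have : U ^ (n + 1) * (star U) ^ (n + 1)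
          = g^[n] (U * star U) * (U ^ n * (star U) ^ n) := by
        rw [pow_succ U, pow_succ' (star U)]
        calc U ^ n * U * (star U * (star U) ^ n)
            = U ^ n * (U * star U) * (star U) ^ n := by simp only [mul_assoc]
          _ = g^[n] (U * star U) * U ^ n * (star U) ^ n := by rw [hL2 n _ h1]
          _ = g^[n] (U * star U) * (U ^ n * (star U) ^ n) := by rw [mul_assoc]
      rw [this]
      exact mul_mem (hgmem n _ h1) ih
  -- key computation: for l = k + m both products reduce to the same normal form
  have key : ∀ a ∈ A₀, ∀ b ∈ A₀, ∀ k m : ℕ,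
      f^[k] a * f^[k + m] b = f^[k + m] b * f^[k] a := by
    intro a ha b hb k m
    have hqk := hq k
    have haq : a * (U ^ k * (star U) ^ k) ∈ A₀ := mul_mem ha hqk
    have hqa : (U ^ k * (star U) ^ k) * a ∈ A₀ := mul_mem hqk ha
    have hpow : U ^ (k + m) = U ^ m * U ^ k := by rw [← pow_add, Nat.add_comm]
    have e1 : f^[k] a * f^[k + m] b
        = (star U) ^ (k + m) * (g^[m] (a * (U ^ k * (star U) ^ k)) * b) * U ^ (k + m) := by
      rw [hfk, hfk]
      calc (star U) ^ k * a * U ^ k * ((star U) ^ (k + m) * b * U ^ (k + m))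
          = (star U) ^ k * (a * (U ^ k * (star U) ^ k) * ((star U) ^ m * (b * U ^ (k + m)))) := by
            rw [pow_add (star U)]; simp only [mul_assoc]
        _ = (star U) ^ k * ((star U) ^ m * g^[m] (a * (U ^ k * (star U) ^ k)) * (b * U ^ (k + m))) := by
            rw [← mul_assoc (a * (U ^ k * (star U) ^ k)), hL4 m _ haq]
        _ = (star U) ^ (k + m) * (g^[m] (a * (U ^ k * (star U) ^ k)) * b) * U ^ (k + m) := by
            rw [pow_add (star U)]; simp only [mul_assoc]
    have e2 : f^[k + m] b * f^[k] a
        = (star U) ^ (k + m) * (b * g^[m] ((U ^ k * (star U) ^ k) * a)) * U ^ (k + m) := by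
      rw [hfk, hfk]
      calc (star U) ^ (k + m) * b * U ^ (k + m) * ((star U) ^ k * a * U ^ k)
          = (star U) ^ (k + m) * (b * (U ^ m * ((U ^ k * (star U) ^ k) * a) * U ^ k)) := by
            rw [hpow]; simp only [mul_assoc]
        _ = (star U) ^ (k + m) * (b * (g^[m] ((U ^ k * (star U) ^ k) * a) * U ^ m * U ^ k)) := by
            rw [hL2 m _ hqa]
        _ = (star U) ^ (k + m) * (b * g^[m] ((U ^ k * (star U) ^ k) * a)) * U ^ (k + m) := by
            rw [hpow]; simp only [mul_assoc]
    rw [e1, e2, hcommA _ hqk a ha, hcommA _ (hgmem m _ haq) b hb]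
  intro a ha b hb k l
  rcases le_total k l with h | h
  · obtain ⟨m, rfl⟩ := Nat.exists_eq_add_of_le h
    exact key a ha b hb k m
  · obtain ⟨m, rfl⟩ := Nat.exists_eq_add_of_le h
    exact (key b hb a ha l m).symm
end
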